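/- arXiv:1704.03231 — 11 statements merged into one kernel-verified Lean document; each statement's English description precedes it below -/
import Mathlib

section
/- A Boolean control network with state update f : D^n × D^m → D^n and output map h : D^n → D^q is NOT observable if and only if its observability weighted pair graph has a non-diagonal vertex v and a cycle C such that there is a (possibly empty) directed path from v to some vertex of C. -/
/-- State trajectory of a control system: `x(0)=x0`, `x(t+1)=f(x(t),u(t))`. -/
def traj {S U : Type*} (f : S → U → S) (u : ℕ → U) (x0 : S) : ℕ → S
  | 0 => x0
  | t + 1 => f (traj f u x0 t) (u t)

/-- Observability: distinct initial states yield different output sequences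
for every input sequence. -/
def observable {S U Y : Type*} (f : S → U → S) (h : S → Y) : Prop :=
  ∀ x0 x0' : S, x0 ≠ x0' → ∀ u : ℕ → U,
    ∃ t : ℕ, h (traj f u x0 t) ≠ h (traj f u x0' t)

/-- Reconstructibility: there is a positive integer `p` such that for all distinct
initial states and every input sequence, if the states at time `p+1` differ then
the output sequences up to time `p+1` differ. -/
def reconstructible {S U Y : Type*} (f : S → U → S) (h : S → Y) : Prop :=
  ∃ p : ℕ, 0 < p ∧ ∀ (x0 x0' : S) (u : ℕ → U), x0 ≠ x0' →
    traj f u x0 (p + 1) ≠ traj f u x0' (p + 1) →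
    ∃ t ≤ p + 1, h (traj f u x0 t) ≠ h (traj f u x0' t)

/-- Edge relation of the observability weighted pair graph (OWPG): vertices are
unordered pairs `s(x, x')` of states with `h x = h x'`, and there is an edge from
`s(x1, x1')` to `s(x2, x2')` iff some input `u` sends `x1 ↦ x2` and `x1' ↦ x2'`
(in either pairing, which is absorbed by unordered pairs). -/
def owpgEdge {n m q : ℕ} (f : (Fin n → Bool) → (Fin m → Bool) → (Fin n → Bool))
    (h : (Fin n → Bool) → (Fin q → Bool)) :
    Sym2 (Fin n → Bool) → Sym2 (Fin n → Bool) → Prop :=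
  fun v w => ∃ x1 x1' x2 x2' : Fin n → Bool,
    v = s(x1, x1') ∧ w = s(x2, x2') ∧ h x1 = h x1' ∧ h x2 = h x2' ∧
    ∃ u : Fin m → Bool, f x1 u = x2 ∧ f x1' u = x2'

lemma sym2_step {n m q : ℕ} {f : (Fin n → Bool) → (Fin m → Bool) → (Fin n → Bool)}
    {h : (Fin n → Bool) → (Fin q → Bool)} {v w : Sym2 (Fin n → Bool)} {a b : Fin n → Bool}
    (hE : owpgEdge f h v w) (hv : v = s(a, b)) :
    ∃ u, w = s(f a u, f b u) ∧ h (f a u) = h (f b u) := by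
  obtain ⟨x1, x1', x2, x2', hv', hw, h1, h2, u, hu1, hu2⟩ := hE
  rw [hv] at hv'
  rw [Sym2.eq_iff] at hv'
  rcases hv' with ⟨rfl, rfl⟩ | ⟨rfl, rfl⟩
  · exact ⟨u, by rw [hw, hu1, hu2], by rw [hu1, hu2]; exact h2⟩
  · exact ⟨u, by rw [hw, hu1, hu2, Sym2.eq_swap], by rw [hu1, hu2]; exact h2.symm⟩

lemma exists_seq {α : Type*} {r : α → α → Prop} {v c : α}
    (h1 : Relation.ReflTransGen r v c) (h2 : Relation.TransGen r c c) :
    ∃ g : ℕ → α, g 0 = v ∧ ∀ t, r (g t) (g (t + 1)) := by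
  have key : ∀ a : {a // Relation.ReflTransGen r a c},
      ∃ b : {a // Relation.ReflTransGen r a c}, r a.1 b.1 := by
    rintro ⟨a, ha⟩
    rcases Relation.ReflTransGen.cases_head ha with rfl | ⟨b, hab, hbc⟩
    · obtain ⟨b, hab, hbc⟩ := (Relation.TransGen.head'_iff).1 h2
      exact ⟨⟨b, hbc⟩, hab⟩
    · exact ⟨⟨b, hbc⟩, hab⟩
  choose nxt hnxt using key
  refine ⟨fun t => (Nat.rec ⟨v, h1⟩ (fun _ p => nxt p) t :
      {a // Relation.ReflTransGen r a c}).1, rfl, fun t => hnxt _⟩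

lemma build {n m q : ℕ} {f : (Fin n → Bool) → (Fin m → Bool) → (Fin n → Bool)}
    {h : (Fin n → Bool) → (Fin q → Bool)} {g : ℕ → Sym2 (Fin n → Bool)}
    (hg : ∀ t, owpgEdge f h (g t) (g (t + 1)))
    {x x' : Fin n → Bool} (h0 : g 0 = s(x, x')) (hh : h x = h x') :
    ∃ u : ℕ → Fin m → Bool, ∀ t, h (traj f u x t) = h (traj f u x' t) := by
  let P : (t : ℕ) → {p : (Fin n → Bool) × (Fin n → Bool) // g t = s(p.1, p.2) ∧ h p.1 = h p.2} :=
    fun t => Nat.rec ⟨(x, x'), h0, hh⟩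
      (fun t prev =>
        ⟨(f prev.1.1 (Classical.choose (sym2_step (hg t) prev.2.1)),
          f prev.1.2 (Classical.choose (sym2_step (hg t) prev.2.1))),
          (Classical.choose_spec (sym2_step (hg t) prev.2.1)).1,
          (Classical.choose_spec (sym2_step (hg t) prev.2.1)).2⟩) t
  set U : ℕ → Fin m → Bool := fun t => Classical.choose (sym2_step (hg t) (P t).2.1) with hU
  have key : ∀ t, traj f U x t = (P t).1.1 ∧ traj f U x' t = (P t).1.2 := by
    intro t
    induction t with
    | zero => exact ⟨rfl, rfl⟩
    | succ t ih =>
      constructor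
      · show f (traj f U x t) (U t) = (P (t + 1)).1.1
        rw [ih.1]
      · show f (traj f U x' t) (U t) = (P (t + 1)).1.2
        rw [ih.2]
  refine ⟨U, fun t => ?_⟩
  rw [(key t).1, (key t).2]
  exact (P t).2.2

/-- A BCN is NOT observable iff its OWPG has a non-diagonal vertex `v` and a
cycle through some vertex `c` with a (possibly empty) directed path from `v` to `c`. -/
theorem bcn_not_observable_iff_owpg {n m q : ℕ}
    (f : (Fin n → Bool) → (Fin m → Bool) → (Fin n → Bool))
    (h : (Fin n → Bool) → (Fin q → Bool)) :
    ¬ observable f h ↔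
      ∃ v c : Sym2 (Fin n → Bool),
        (∃ x x' : Fin n → Bool, v = s(x, x') ∧ x ≠ x' ∧ h x = h x') ∧
        Relation.ReflTransGen (owpgEdge f h) v c ∧
        Relation.TransGen (owpgEdge f h) c c := by
  constructor
  · intro hno
    simp only [observable, not_forall, not_exists, not_not] at hno
    obtain ⟨x0, x0', hne, u, heq⟩ := hno
    set V : ℕ → Sym2 (Fin n → Bool) :=
      fun t => s(traj f u x0 t, traj f u x0' t) with hV
    have hedge : ∀ t, owpgEdge f h (V t) (V (t + 1)) := fun t =>
      ⟨traj f u x0 t, traj f u x0' t, traj f u x0 (t + 1), traj f u x0' (t + 1),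
        rfl, rfl, heq t, heq (t + 1), u t, rfl, rfl⟩
    have reach : ∀ s t : ℕ, s ≤ t → Relation.ReflTransGen (owpgEdge f h) (V s) (V t) := by
      intro s t hst
      induction t, hst using Nat.le_induction with
      | base => exact Relation.ReflTransGen.refl
      | succ t hst ih => exact ih.tail (hedge t)
    obtain ⟨a, b, hab, hVab⟩ := Finite.exists_ne_map_eq_of_infinite V
    wlog hlt : a < b generalizing a b
    · exact this b a hab.symm hVab.symm (by omega)
    refine ⟨V 0, V a, ⟨x0, x0', rfl, hne, heq 0⟩, reach 0 a (Nat.zero_le a), ?_⟩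
    have : Relation.TransGen (owpgEdge f h) (V a) (V b) :=
      (Relation.TransGen.head'_iff).2 ⟨V (a + 1), hedge a, reach (a + 1) b hlt⟩
    rwa [hVab] at this ⊢
  · rintro ⟨v, c, ⟨x, x', rfl, hne, hh⟩, hpath, hcyc⟩
    obtain ⟨g, hg0, hgE⟩ := exists_seq hpath hcyc
    obtain ⟨u, hu⟩ := build hgE hg0 hh
    intro hobs
    obtain ⟨t, ht⟩ := hobs x x' hne u
    exact ht (hu t)
end

section
/- Consider a Boolean control network with state update f : D^n × D^m → D^n and output map h : D^n → D^q. If in its observability weighted pair graph there is a directed path from a non-diagonal vertex to a diagonal vertex, then the BCN is not observable. -/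
lemma traj_shift {S U : Type*} (f : S → U → S) (u : ℕ → U) (x0 : S) :
    ∀ t, traj f u x0 (t + 1) = traj f (fun k => u (k + 1)) (f x0 (u 0)) t
  | 0 => rfl
  | t + 1 => by
    show f (traj f u x0 (t + 1)) (u (t + 1)) = _
    rw [traj_shift f u x0 t]
    rfl

lemma owpg_key {n m q : ℕ} (f : (Fin n → Bool) → (Fin m → Bool) → (Fin n → Bool))
    (h : (Fin n → Bool) → (Fin q → Bool)) {w : Sym2 (Fin n → Bool)} (hw : w.IsDiag)
    {v : Sym2 (Fin n → Bool)} (hpath : Relation.ReflTransGen (owpgEdge f h) v w) :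
    ∀ x x' : Fin n → Bool, v = s(x, x') → h x = h x' →
      ∃ u : ℕ → Fin m → Bool, ∀ t, h (traj f u x t) = h (traj f u x' t) := by
  induction hpath using Relation.ReflTransGen.head_induction_on with
  | refl =>
    intro x x' hvx hhx
    rw [hvx] at hw
    obtain rfl : x = x' := Sym2.mk_isDiag_iff.mp hw
    exact ⟨fun _ _ => false, fun t => rfl⟩
  | head hab _ ih =>
    intro x x' hvx hhx
    obtain ⟨x1, x1', x2, x2', hva, hvb, h1, h2, u0, hf1, hf2⟩ := hab
    rw [hva] at hvx
    rcases Sym2.eq_iff.mp hvx.symm with ⟨rfl, rfl⟩ | ⟨rfl, rfl⟩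
    · obtain ⟨u', hu'⟩ := ih x2 x2' hvb h2
      refine ⟨fun t => Nat.casesOn t u0 u', fun t => ?_⟩
      cases t with
      | zero => exact hhx
      | succ t =>
        rw [traj_shift, traj_shift]
        simpa [hf1, hf2] using hu' t
    · obtain ⟨u', hu'⟩ := ih x2' x2 (hvb.trans (Sym2.eq_swap)) h2.symm
      refine ⟨fun t => Nat.casesOn t u0 u', fun t => ?_⟩
      cases t with
      | zero => exact hhx
      | succ t =>
        rw [traj_shift, traj_shift]
        simpa [hf1, hf2] using hu' t

/-- If the OWPG has a directed path from a non-diagonal vertex to a diagonal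
vertex, then the BCN is not observable. -/
theorem bcn_not_observable_of_path_to_diagonal {n m q : ℕ}
    (f : (Fin n → Bool) → (Fin m → Bool) → (Fin n → Bool))
    (h : (Fin n → Bool) → (Fin q → Bool))
    (v w : Sym2 (Fin n → Bool))
    (hv : ∃ x x' : Fin n → Bool, v = s(x, x') ∧ x ≠ x' ∧ h x = h x')
    (hw : w.IsDiag)
    (hpath : Relation.ReflTransGen (owpgEdge f h) v w) :
    ¬ observable f h := by
  obtain ⟨x, x', hvx, hne, hhx⟩ := hv
  obtain ⟨u, hu⟩ := owpg_key f h hw hpath x x' hvx hhx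
  intro hobs
  obtain ⟨t, ht⟩ := hobs x x' hne u
  exact ht (hu t)
end

section
/- Let a Boolean control network be given in cascade form: the state indices are partitioned into blocks X_1,…,X_s and the output indices into nonempty blocks Y_1,…,Y_s such that for each i, the update of every state node in X_i depends only on the input nodes and on the state nodes in X_1 ∪ … ∪ X_i, and every output node in Y_i depends only on the state nodes in X_i. For each i, let the sub-BCN Σ_i have state space D^{X_i}, inputs consisting of the original inputs together with the states of X_1 ∪ … ∪ X_{i-1} regarded as free input variables, state update given by the updates of the nodes of X_i, and outputs the nodes of Y_i. If every sub-BCN Σ_i, i=1,…,s, is observable, then the whole BCN is observable. -/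
/-- Cascade form: if the state indices are partitioned into blocks `X 0, …, X (s-1)`
and the output indices into nonempty blocks `Y 0, …, Y (s-1)` such that every state
node in `X i` depends only on the inputs and the state nodes in `X 0 ∪ ⋯ ∪ X i` and
every output node in `Y i` depends only on the state nodes in `X i`, and if every
sub-BCN `Σ i` (state space `D^(X i)`, inputs the original inputs together with the
states of `X 0 ∪ ⋯ ∪ X (i-1)` regarded as free input variables, dynamics the updates
of the nodes of `X i`, outputs the nodes of `Y i`) is observable, then the whole BCN
is observable. -/
theorem observable_of_cascade {n m q s : ℕ}
    (f : (Fin n → Bool) → (Fin m → Bool) → (Fin n → Bool))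
    (h : (Fin n → Bool) → (Fin q → Bool))
    (X : Fin s → Finset (Fin n)) (Y : Fin s → Finset (Fin q))
    (hXdisj : ∀ i j : Fin s, i ≠ j → Disjoint (X i) (X j))
    (hXcover : ∀ l : Fin n, ∃ i : Fin s, l ∈ X i)
    (hYne : ∀ i : Fin s, (Y i).Nonempty)
    (hYdisj : ∀ i j : Fin s, i ≠ j → Disjoint (Y i) (Y j))
    (hYcover : ∀ k : Fin q, ∃ i : Fin s, k ∈ Y i)
    (hfdep : ∀ i : Fin s, ∀ j ∈ X i, ∀ (x x' : Fin n → Bool) (u : Fin m → Bool),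
      (∀ l : Fin n, (∃ k : Fin s, k ≤ i ∧ l ∈ X k) → x l = x' l) → f x u j = f x' u j)
    (hhdep : ∀ i : Fin s, ∀ k ∈ Y i, ∀ x x' : Fin n → Bool,
      (∀ l ∈ X i, x l = x' l) → h x k = h x' k)
    (hobs : ∀ i : Fin s, observable
      (fun (z : {l : Fin n // l ∈ X i} → Bool)
           (uw : (Fin m → Bool) × ({l : Fin n // ∃ k : Fin s, k < i ∧ l ∈ X k} → Bool)) =>
        fun j : {l : Fin n // l ∈ X i} =>
          f (fun l : Fin n =>
              if hl : l ∈ X i then z ⟨l, hl⟩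
              else if hl' : ∃ k : Fin s, k < i ∧ l ∈ X k then uw.2 ⟨l, hl'⟩
              else false) uw.1 j.1)
      (fun (z : {l : Fin n // l ∈ X i} → Bool) (k : {k' : Fin q // k' ∈ Y i}) =>
        h (fun l : Fin n => if hl : l ∈ X i then z ⟨l, hl⟩ else false) k.1)) :
    observable f h := by
  classical
  intro x0 x0' hne u
  obtain ⟨l0, hl0⟩ : ∃ l, x0 l ≠ x0' l := by
    by_contra hc; push_neg at hc; exact hne (funext hc)
  obtain ⟨i0, hi0⟩ := hXcover l0
  obtain ⟨i, hiS, hmin⟩ := (wellFounded_lt (α := Fin s)).has_min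
    {i | ∃ l ∈ X i, x0 l ≠ x0' l} ⟨i0, l0, hi0, hl0⟩
  obtain ⟨l, hlX, hlne⟩ := hiS
  -- agreement below i for initial states
  have hlow0 : ∀ l : Fin n, (∃ k : Fin s, k < i ∧ l ∈ X k) → x0 l = x0' l := by
    rintro l' ⟨k, hk, hl'⟩
    by_contra hc
    exact hmin k ⟨l', hl', hc⟩ hk
  -- agreement below i propagates along trajectories
  have hA : ∀ t : ℕ, ∀ l : Fin n, (∃ k : Fin s, k < i ∧ l ∈ X k) →
      traj f u x0 t l = traj f u x0' t l := by
    intro t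
    induction t with
    | zero => exact hlow0
    | succ t ih =>
      rintro l' ⟨k, hk, hl'⟩
      show f (traj f u x0 t) (u t) l' = f (traj f u x0' t) (u t) l'
      refine hfdep k l' hl' _ _ _ ?_
      rintro l'' ⟨k', hk', hl''⟩
      exact ih l'' ⟨k', lt_of_le_of_lt hk' hk, hl''⟩
  -- sub-system input sequence
  set uw : ℕ → (Fin m → Bool) × ({l : Fin n // ∃ k : Fin s, k < i ∧ l ∈ X k} → Bool) :=
    fun t => (u t, fun l => traj f u x0 t l.1) with huw
  set Fi : ({l : Fin n // l ∈ X i} → Bool) →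
      ((Fin m → Bool) × ({l : Fin n // ∃ k : Fin s, k < i ∧ l ∈ X k} → Bool)) →
      ({l : Fin n // l ∈ X i} → Bool) :=
    fun z uw => fun j : {l : Fin n // l ∈ X i} =>
      f (fun l : Fin n =>
          if hl : l ∈ X i then z ⟨l, hl⟩
          else if hl' : ∃ k : Fin s, k < i ∧ l ∈ X k then uw.2 ⟨l, hl'⟩
          else false) uw.1 j.1 with hFi
  -- sub trajectory equals restriction of full trajectory
  have hB : ∀ x1 : Fin n → Bool,
      (∀ t : ℕ, ∀ l : Fin n, (∃ k : Fin s, k < i ∧ l ∈ X k) →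
        traj f u x1 t l = traj f u x0 t l) →
      ∀ t : ℕ, ∀ j : {l : Fin n // l ∈ X i},
        traj Fi uw (fun j => x1 j.1) t j = traj f u x1 t j.1 := by
    intro x1 hx1 t
    induction t with
    | zero => intro j; rfl
    | succ t ih =>
      intro j
      show Fi (traj Fi uw (fun j => x1 j.1) t) (uw t) j = f (traj f u x1 t) (u t) j.1
      refine hfdep i j.1 j.2 _ _ _ ?_
      rintro l' ⟨k, hk, hl'⟩
      by_cases hli : l' ∈ X i
      · simp only [hli, dif_pos]
        exact ih ⟨l', hli⟩
      · have hki : k < i := lt_of_le_of_ne hk (by rintro rfl; exact hli hl')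
        simp only [hli, dif_neg, not_false_iff]
        rw [dif_pos ⟨k, hki, hl'⟩]
        exact (hx1 t l' ⟨k, hki, hl'⟩).symm
  have hB0 := hB x0 (fun _ _ _ => rfl)
  have hB1 := hB x0' (fun t l' hl' => (hA t l' hl').symm)
  -- initial sub-states differ
  have hz : (fun j : {l : Fin n // l ∈ X i} => x0 j.1) ≠ (fun j => x0' j.1) := by
    intro hc
    exact hlne (congrFun hc ⟨l, hlX⟩)
  obtain ⟨t, ht⟩ := hobs i _ _ hz uw
  refine ⟨t, ?_⟩
  intro hc
  apply ht
  funext k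
  have e0 : h (fun l : Fin n =>
      if hl : l ∈ X i then traj Fi uw (fun j => x0 j.1) t ⟨l, hl⟩ else false) k.1
      = h (traj f u x0 t) k.1 := by
    refine hhdep i k.1 k.2 _ _ ?_
    intro l' hl'
    simp only [hl', dif_pos]
    exact hB0 t ⟨l', hl'⟩
  have e1 : h (fun l : Fin n =>
      if hl : l ∈ X i then traj Fi uw (fun j => x0' j.1) t ⟨l, hl⟩ else false) k.1
      = h (traj f u x0' t) k.1 := by
    refine hhdep i k.1 k.2 _ _ ?_
    intro l' hl'
    simp only [hl', dif_pos]
    exact hB1 t ⟨l', hl'⟩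
  show h _ k.1 = h _ k.1
  rw [e0, e1, hc]
end

section
/- A Boolean control network with state update f : D^n × D^m → D^n and output map h : D^n → D^q is NOT reconstructible if and only if its reconstructibility weighted pair graph has a cycle. -/
/-- Edge relation of the reconstructibility weighted pair graph (RWPG): vertices are
unordered pairs `s(x, x')` of distinct states with `h x = h x'`, and there is an edge
from `s(x1, x1')` to `s(x2, x2')` iff some input `u` sends `x1 ↦ x2` and `x1' ↦ x2'`
(in either pairing, which is absorbed by unordered pairs). -/
def rwpgEdge {n m q : ℕ} (f : (Fin n → Bool) → (Fin m → Bool) → (Fin n → Bool))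
    (h : (Fin n → Bool) → (Fin q → Bool)) :
    Sym2 (Fin n → Bool) → Sym2 (Fin n → Bool) → Prop :=
  fun v w => ∃ x1 x1' x2 x2' : Fin n → Bool,
    v = s(x1, x1') ∧ w = s(x2, x2') ∧
    x1 ≠ x1' ∧ h x1 = h x1' ∧ x2 ≠ x2' ∧ h x2 = h x2' ∧
    ∃ u : Fin m → Bool, f x1 u = x2 ∧ f x1' u = x2'

lemma traj_succ {S U : Type*} (f : S → U → S) (u : ℕ → U) (x0 : S) (t : ℕ) :
    traj f u x0 (t + 1) = f (traj f u x0 t) (u t) := rfl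

lemma exists_seq_of_transGen {α : Type*} {r : α → α → Prop} {c : α}
    (hcc : Relation.TransGen r c c) : ∃ w : ℕ → α, ∀ t, r (w t) (w (t + 1)) := by
  have step : ∀ v : α, Relation.TransGen r v c → ∃ d, r v d ∧ Relation.TransGen r d c := by
    intro v hv
    obtain ⟨d, hd, hdc⟩ := Relation.TransGen.head'_iff.1 hv
    rcases Relation.reflTransGen_iff_eq_or_transGen.1 hdc with rfl | ht
    · exact ⟨c, hd, hcc⟩
    · exact ⟨d, hd, ht⟩
  choose nxt hr hT using step
  refine ⟨fun t => (Nat.rec (motive := fun _ => {v // Relation.TransGen r v c}) ⟨c, hcc⟩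
    (fun _ p => ⟨nxt p.1 p.2, hT p.1 p.2⟩) t).1, fun t => ?_⟩
  exact hr _ _

lemma pair_traj {n m q : ℕ} {f : (Fin n → Bool) → (Fin m → Bool) → (Fin n → Bool)}
    {h : (Fin n → Bool) → (Fin q → Bool)} {w : ℕ → Sym2 (Fin n → Bool)}
    (hw : ∀ t, rwpgEdge f h (w t) (w (t + 1))) :
    ∃ (a b : ℕ → (Fin n → Bool)) (u : ℕ → (Fin m → Bool)),
      ∀ t, a t ≠ b t ∧ h (a t) = h (b t) ∧
        f (a t) (u t) = a (t + 1) ∧ f (b t) (u t) = b (t + 1) := by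
  classical
  choose x1 x1' x2 x2' hv hwn hne h1 hne2 h2 u hf hf' using hw
  set g : ℕ → (Fin n → Bool) × (Fin n → Bool) := fun t =>
    Nat.rec (motive := fun _ => (Fin n → Bool) × (Fin n → Bool)) (x1 0, x1' 0)
      (fun t p => if p.1 = x1 t then (x2 t, x2' t) else (x2' t, x2 t)) t with hg
  have hgsucc : ∀ t, g (t + 1) = if (g t).1 = x1 t then (x2 t, x2' t) else (x2' t, x2 t) :=
    fun t => rfl
  have key : ∀ t, g t = (x1 t, x1' t) ∨ g t = (x1' t, x1 t) := by
    intro t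
    induction t with
    | zero => exact Or.inl rfl
    | succ t ih =>
      have hs : s(x2 t, x2' t) = s(x1 (t + 1), x1' (t + 1)) := by
        rw [← hwn t, hv (t + 1)]
      have hcases := (Sym2.eq_iff).1 hs
      rcases ih with h' | h'
      · rw [hgsucc t, h', if_pos rfl]
        rcases hcases with ⟨e1, e2⟩ | ⟨e1, e2⟩
        · exact Or.inl (by rw [e1, e2])
        · exact Or.inr (by rw [e1, e2])
      · rw [hgsucc t, h', if_neg (by simpa using (hne t).symm)]
        rcases hcases with ⟨e1, e2⟩ | ⟨e1, e2⟩
        · exact Or.inr (by rw [e1, e2])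
        · exact Or.inl (by rw [e1, e2])
  have step : ∀ t, f (g t).1 (u t) = (g (t + 1)).1 ∧ f (g t).2 (u t) = (g (t + 1)).2 := by
    intro t
    rcases key t with h' | h'
    · rw [hgsucc t, h', if_pos rfl]
      exact ⟨hf t, hf' t⟩
    · rw [hgsucc t, h', if_neg (by simpa using (hne t).symm)]
      exact ⟨hf' t, hf t⟩
  refine ⟨fun t => (g t).1, fun t => (g t).2, u, fun t => ⟨?_, ?_, (step t).1, (step t).2⟩⟩
  · show (g t).1 ≠ (g t).2
    rcases key t with h' | h' <;> rw [h']
    · exact hne t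
    · exact (hne t).symm
  · show h (g t).1 = h (g t).2
    rcases key t with h' | h' <;> rw [h']
    · exact h1 t
    · exact (h1 t).symm

/-- A BCN is NOT reconstructible iff its RWPG has a cycle. -/
theorem bcn_not_reconstructible_iff_rwpg_cycle {n m q : ℕ}
    (f : (Fin n → Bool) → (Fin m → Bool) → (Fin n → Bool))
    (h : (Fin n → Bool) → (Fin q → Bool)) :
    ¬ reconstructible f h ↔
      ∃ c : Sym2 (Fin n → Bool), Relation.TransGen (rwpgEdge f h) c c := by
  classical
  constructor
  · intro hnr
    set N := Fintype.card (Sym2 (Fin n → Bool)) with hNdef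
    have hQ : ¬ (∀ (x0 x0' : Fin n → Bool) (u : ℕ → Fin m → Bool), x0 ≠ x0' →
        traj f u x0 (N + 1 + 1) ≠ traj f u x0' (N + 1 + 1) →
        ∃ t ≤ N + 1 + 1, h (traj f u x0 t) ≠ h (traj f u x0' t)) := by
      intro hq
      exact hnr ⟨N + 1, Nat.succ_pos _, hq⟩
    push_neg at hQ
    obtain ⟨x0, x0', u, hx, hdiff, hout⟩ := hQ
    have hsame : ∀ t s, traj f u x0 t = traj f u x0' t →
        traj f u x0 (t + s) = traj f u x0' (t + s) := by
      intro t s he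
      induction s with
      | zero => exact he
      | succ s ih =>
        show traj f u x0 ((t + s) + 1) = traj f u x0' ((t + s) + 1)
        rw [traj_succ, traj_succ, ih]
    have hne_t : ∀ t, t ≤ N + 1 + 1 → traj f u x0 t ≠ traj f u x0' t := by
      intro t ht he
      apply hdiff
      have := hsame t (N + 1 + 1 - t) he
      rwa [Nat.add_sub_cancel' ht] at this
    have hedge : ∀ k, k + 1 ≤ N + 1 + 1 →
        rwpgEdge f h s(traj f u x0 k, traj f u x0' k)
          s(traj f u x0 (k + 1), traj f u x0' (k + 1)) := by
      intro k hk
      exact ⟨_, _, _, _, rfl, rfl, hne_t k (Nat.le_of_succ_le hk),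
        hout k (Nat.le_of_succ_le hk), hne_t (k + 1) hk, hout (k + 1) hk,
        u k, (traj_succ f u x0 k).symm, (traj_succ f u x0' k).symm⟩
    have hpath : ∀ j, j ≤ N + 1 + 1 → ∀ i, i < j →
        Relation.TransGen (rwpgEdge f h)
          s(traj f u x0 i, traj f u x0' i) s(traj f u x0 j, traj f u x0' j) := by
      intro j
      induction j with
      | zero => intro _ i hi; exact absurd hi (Nat.not_lt_zero i)
      | succ j ih =>
        intro hj i hi
        rcases Nat.lt_succ_iff_lt_or_eq.1 hi with hij | rfl
        · exact (ih (Nat.le_of_succ_le hj) i hij).tail (hedge j hj)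
        · exact Relation.TransGen.single (hedge i hj)
    have hcard : Fintype.card (Sym2 (Fin n → Bool)) < Fintype.card (Fin (N + 1 + 2)) := by
      simp only [Fintype.card_fin]
      omega
    obtain ⟨i, j, hij, heq⟩ := Fintype.exists_ne_map_eq_of_card_lt
      (fun i : Fin (N + 1 + 2) => s(traj f u x0 i.1, traj f u x0' i.1)) hcard
    rcases Ne.lt_or_gt hij with hlt | hlt
    · refine ⟨s(traj f u x0 i.1, traj f u x0' i.1), ?_⟩
      have hp := hpath j.1 (by omega : j.1 ≤ N + 1 + 1) i.1 hlt
      rwa [← heq] at hp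
    · refine ⟨s(traj f u x0 j.1, traj f u x0' j.1), ?_⟩
      have hp := hpath i.1 (by omega : i.1 ≤ N + 1 + 1) j.1 hlt
      rwa [heq] at hp
  · rintro ⟨c, hcc⟩ ⟨p, hp, hrec⟩
    obtain ⟨w, hw⟩ := exists_seq_of_transGen hcc
    obtain ⟨a, b, u, H⟩ := pair_traj hw
    have ht1 : ∀ t, traj f u (a 0) t = a t := by
      intro t
      induction t with
      | zero => rfl
      | succ t ih => rw [traj_succ, ih, (H t).2.2.1]
    have ht2 : ∀ t, traj f u (b 0) t = b t := by
      intro t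
      induction t with
      | zero => rfl
      | succ t ih => rw [traj_succ, ih, (H t).2.2.2]
    obtain ⟨t, ht, hne⟩ := hrec (a 0) (b 0) u (H 0).1
      (by rw [ht1, ht2]; exact (H (p + 1)).1)
    exact hne (by rw [ht1, ht2]; exact (H t).2.1)
end

section
/- Let a Boolean control network be given in cascade form: the state indices are partitioned into blocks X_1,…,X_s and the output indices into nonempty blocks Y_1,…,Y_s such that for each i, the update of every state node in X_i depends only on the input nodes and on the state nodes in X_1 ∪ … ∪ X_i, and every output node in Y_i depends only on the state nodes in X_i. For each i, let the sub-BCN Σ_i have state space D^{X_i}, inputs consisting of the original inputs together with the states of X_1 ∪ … ∪ X_{i-1} regarded as free input variables, state update given by the updates of the nodes of X_i, and outputs the nodes of Y_i. If every sub-BCN Σ_i, i=1,…,s, is reconstructible, then the whole BCN is reconstructible. -/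
/-- Auxiliary: the subsystem trajectory reproduces the restriction of the full
trajectory, as long as the "extra input" `w` matches the lower-block values of
the full trajectory. -/
lemma aux_subtraj {n m s : ℕ}
    (f : (Fin n → Bool) → (Fin m → Bool) → (Fin n → Bool))
    (X : Fin s → Finset (Fin n)) (i : Fin s)
    (hfdep : ∀ j ∈ X i, ∀ (x x' : Fin n → Bool) (u : Fin m → Bool),
      (∀ l : Fin n, (∃ k : Fin s, k ≤ i ∧ l ∈ X k) → x l = x' l) → f x u j = f x' u j)
    (u : ℕ → Fin m → Bool) (x0 : Fin n → Bool) (T' : ℕ)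
    (w : ℕ → (Fin m → Bool) × ({l : Fin n // ∃ k : Fin s, k < i ∧ l ∈ X k} → Bool))
    (R : ℕ)
    (hw1 : ∀ r < R, (w r).1 = u (T' + r))
    (hw2 : ∀ r < R, ∀ (l : Fin n) (hl : ∃ k : Fin s, k < i ∧ l ∈ X k), l ∉ X i →
      (w r).2 ⟨l, hl⟩ = traj f u x0 (T' + r) l) :
    ∀ r ≤ R, traj (fun (z : {l : Fin n // l ∈ X i} → Bool)
           (uw : (Fin m → Bool) × ({l : Fin n // ∃ k : Fin s, k < i ∧ l ∈ X k} → Bool)) =>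
        fun j : {l : Fin n // l ∈ X i} =>
          f (fun l : Fin n =>
              if hl : l ∈ X i then z ⟨l, hl⟩
              else if hl' : ∃ k : Fin s, k < i ∧ l ∈ X k then uw.2 ⟨l, hl'⟩
              else false) uw.1 j.1) w (fun j => traj f u x0 T' j.1) r
      = fun j => traj f u x0 (T' + r) j.1 := by
  intro r hr
  induction r with
  | zero => rfl
  | succ r ih =>
    have hrR : r < R := hr
    have ihr := ih (le_of_lt hrR)
    funext j
    show f _ (w r).1 j.1 = traj f u x0 (T' + (r + 1)) j.1
    have hstep : traj f u x0 (T' + (r + 1)) j.1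
        = f (traj f u x0 (T' + r)) (u (T' + r)) j.1 := rfl
    rw [hstep, hw1 r hrR]
    refine hfdep j.1 j.2 _ _ _ ?_
    intro l hkl
    by_cases hXi : l ∈ X i
    · simp only [dif_pos hXi]
      exact congrFun ihr ⟨l, hXi⟩
    · obtain ⟨k, hki, hlk⟩ := hkl
      have hklt : k < i := lt_of_le_of_ne hki (fun hk => hXi (hk ▸ hlk))
      have hl' : ∃ k : Fin s, k < i ∧ l ∈ X k := ⟨k, hklt, hlk⟩
      simp only [dif_neg hXi, dif_pos hl']
      exact hw2 r hrR l hl' hXi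

/-- Cascade form: if the state indices are partitioned into blocks `X 0, …, X (s-1)`
and the output indices into nonempty blocks `Y 0, …, Y (s-1)` such that every state
node in `X i` depends only on the inputs and the state nodes in `X 0 ∪ ⋯ ∪ X i` and
every output node in `Y i` depends only on the state nodes in `X i`, and if every
sub-BCN `Σ i` (state space `D^(X i)`, inputs the original inputs together with the
states of `X 0 ∪ ⋯ ∪ X (i-1)` regarded as free input variables, dynamics the updates
of the nodes of `X i`, outputs the nodes of `Y i`) is reconstructible, then the whole BCN
is reconstructible. -/
theorem reconstructible_of_cascade {n m q s : ℕ}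
    (f : (Fin n → Bool) → (Fin m → Bool) → (Fin n → Bool))
    (h : (Fin n → Bool) → (Fin q → Bool))
    (X : Fin s → Finset (Fin n)) (Y : Fin s → Finset (Fin q))
    (hXdisj : ∀ i j : Fin s, i ≠ j → Disjoint (X i) (X j))
    (hXcover : ∀ l : Fin n, ∃ i : Fin s, l ∈ X i)
    (hYne : ∀ i : Fin s, (Y i).Nonempty)
    (hYdisj : ∀ i j : Fin s, i ≠ j → Disjoint (Y i) (Y j))
    (hYcover : ∀ k : Fin q, ∃ i : Fin s, k ∈ Y i)
    (hfdep : ∀ i : Fin s, ∀ j ∈ X i, ∀ (x x' : Fin n → Bool) (u : Fin m → Bool),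
      (∀ l : Fin n, (∃ k : Fin s, k ≤ i ∧ l ∈ X k) → x l = x' l) → f x u j = f x' u j)
    (hhdep : ∀ i : Fin s, ∀ k ∈ Y i, ∀ x x' : Fin n → Bool,
      (∀ l ∈ X i, x l = x' l) → h x k = h x' k)
    (hrec : ∀ i : Fin s, reconstructible
      (fun (z : {l : Fin n // l ∈ X i} → Bool)
           (uw : (Fin m → Bool) × ({l : Fin n // ∃ k : Fin s, k < i ∧ l ∈ X k} → Bool)) =>
        fun j : {l : Fin n // l ∈ X i} =>
          f (fun l : Fin n =>
              if hl : l ∈ X i then z ⟨l, hl⟩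
              else if hl' : ∃ k : Fin s, k < i ∧ l ∈ X k then uw.2 ⟨l, hl'⟩
              else false) uw.1 j.1)
      (fun (z : {l : Fin n // l ∈ X i} → Bool) (k : {k' : Fin q // k' ∈ Y i}) =>
        h (fun l : Fin n => if hl : l ∈ X i then z ⟨l, hl⟩ else false) k.1)) :
    reconstructible f h := by
  classical
  rcases Nat.eq_zero_or_pos s with hs | hs
  · subst hs
    exact ⟨1, one_pos, fun x0 x0' u hne _ =>
      absurd (funext fun l => (hXcover l).choose.elim0) hne⟩
  choose p hp using hrec
  set P1 : ℕ := ∑ k : Fin s, (p k + 1) with hP1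
  have hT_le : ∀ i : Fin s, (∑ k ∈ Finset.Iic i, (p k + 1)) ≤ P1 :=
    fun i => Finset.sum_le_sum_of_subset (Finset.subset_univ _)
  have hP1ge : 2 ≤ P1 := by
    obtain ⟨i0⟩ : Nonempty (Fin s) := ⟨⟨0, hs⟩⟩
    have h1 : 2 ≤ p i0 + 1 := by have := (hp i0).1; omega
    have h2 : p i0 + 1 ≤ P1 :=
      Finset.single_le_sum (f := fun k => p k + 1) (fun k _ => Nat.zero_le _)
        (Finset.mem_univ i0)
    omega
  refine ⟨P1 - 1, by omega, ?_⟩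
  intro x0 x0' u hne hdiff
  have hP1' : P1 - 1 + 1 = P1 := by omega
  rw [hP1'] at hdiff
  by_contra hcon
  push_neg at hcon
  rw [hP1'] at hcon
  -- hcon : ∀ t ≤ P1, outputs agree
  have keyN : ∀ N : ℕ, ∀ i : Fin s, i.val < N →
      ∀ t, (∑ k ∈ Finset.Iic i, (p k + 1)) ≤ t → t ≤ P1 →
      ∀ l ∈ X i, traj f u x0 t l = traj f u x0' t l := by
    intro N
    induction N with
    | zero => intro i hi; omega
    | succ N IHN =>
    intro i hiN
    have IH : ∀ k : Fin s, k < i →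
        ∀ t, (∑ k' ∈ Finset.Iic k, (p k' + 1)) ≤ t → t ≤ P1 →
        ∀ l ∈ X k, traj f u x0 t l = traj f u x0' t l := by
      intro k hk
      exact IHN k (by have := Fin.lt_iff_val_lt_val.mp hk; omega)
    intro t hTt htP l hl
    have hIic : (∑ k ∈ Finset.Iic i, (p k + 1))
        = (p i + 1) + ∑ k ∈ Finset.Iio i, (p k + 1) := by
      rw [← Finset.Iio_insert, Finset.sum_insert (by simp)]
    set T' : ℕ := t - (p i + 1) with hT'
    have hpt : p i + 1 ≤ t := by omega
    have ht' : T' + (p i + 1) = t := by omega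
    have hSiT' : (∑ k ∈ Finset.Iio i, (p k + 1)) ≤ T' := by omega
    have hlow : ∀ t', (∑ k ∈ Finset.Iio i, (p k + 1)) ≤ t' → t' ≤ P1 →
        ∀ l', (∃ k : Fin s, k < i ∧ l' ∈ X k) →
          traj f u x0 t' l' = traj f u x0' t' l' := by
      rintro t' h1 h2 l' ⟨k, hk, hlk⟩
      refine IH k hk t' ?_ h2 l' hlk
      refine le_trans (Finset.sum_le_sum_of_subset ?_) h1
      intro x hx
      exact Finset.mem_Iio.mpr (lt_of_le_of_lt (Finset.mem_Iic.mp hx) hk)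
    set F := fun (z : {l : Fin n // l ∈ X i} → Bool)
        (uw : (Fin m → Bool) × ({l : Fin n // ∃ k : Fin s, k < i ∧ l ∈ X k} → Bool)) =>
      fun j : {l : Fin n // l ∈ X i} =>
        f (fun l : Fin n =>
            if hl : l ∈ X i then z ⟨l, hl⟩
            else if hl' : ∃ k : Fin s, k < i ∧ l ∈ X k then uw.2 ⟨l, hl'⟩
            else false) uw.1 j.1 with hF
    set w : ℕ → (Fin m → Bool) × ({l : Fin n // ∃ k : Fin s, k < i ∧ l ∈ X k} → Bool) :=
      fun r => (u (T' + r), fun l' => traj f u x0 (T' + r) l'.1) with hw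
    have hA := aux_subtraj f X i (hfdep i) u x0 T' w (p i + 1)
      (fun r _ => rfl) (fun r _ l' hl' _ => rfl)
    have hB := aux_subtraj f X i (hfdep i) u x0' T' w (p i + 1)
      (fun r _ => rfl) (fun r hr l' hl' hnXi => by
        show traj f u x0 (T' + r) l' = traj f u x0' (T' + r) l'
        exact hlow (T' + r) (by omega) (by omega) l' hl')
    set z0 : {l : Fin n // l ∈ X i} → Bool := fun j => traj f u x0 T' j.1 with hz0def
    set z0' : {l : Fin n // l ∈ X i} → Bool := fun j => traj f u x0' T' j.1 with hz0'def
    -- reduce goal to equality of subsystem end states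
    have hred : traj F w z0 (p i + 1) = traj F w z0' (p i + 1) →
        traj f u x0 t l = traj f u x0' t l := by
      intro hend
      have e1 := congrFun (hA (p i + 1) le_rfl) ⟨l, hl⟩
      have e2 := congrFun (hB (p i + 1) le_rfl) ⟨l, hl⟩
      rw [ht'] at e1 e2
      rw [← e1, ← e2, hend]
    by_cases hz : z0 = z0'
    · exact hred (by rw [hz])
    by_cases hend : traj F w z0 (p i + 1) = traj F w z0' (p i + 1)
    · exact hred hend
    obtain ⟨r, hrle, hneq⟩ := (hp i).2 z0 z0' w hz hend
    exfalso
    apply hneq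
    funext k
    show h _ k.1 = h _ k.1
    have hAr := hA r hrle
    have hBr := hB r hrle
    have hfill1 : h (fun l : Fin n =>
        if hl : l ∈ X i then (traj F w z0 r) ⟨l, hl⟩ else false) k.1
        = h (traj f u x0 (T' + r)) k.1 := by
      refine hhdep i k.1 k.2 _ _ ?_
      intro l' hl'
      simp only [dif_pos hl']
      exact congrFun hAr ⟨l', hl'⟩
    have hfill2 : h (fun l : Fin n =>
        if hl : l ∈ X i then (traj F w z0' r) ⟨l, hl⟩ else false) k.1
        = h (traj f u x0' (T' + r)) k.1 := by
      refine hhdep i k.1 k.2 _ _ ?_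
      intro l' hl'
      simp only [dif_pos hl']
      exact congrFun hBr ⟨l', hl'⟩
    rw [hfill1, hfill2]
    have hle : T' + r ≤ P1 := by omega
    exact congrFun (hcon (T' + r) hle) k.1
  apply hdiff
  funext l
  obtain ⟨i, hil⟩ := hXcover l
  exact keyN s i i.isLt P1 (hT_le i) le_rfl l hil
end

section
/- Every observable Boolean control network is reconstructible: if a BCN (f,h) with f : D^n × D^m → D^n and h : D^n → D^q is observable, then it is reconstructible. -/
private lemma traj_eq_of_eq_below {S U : Type*} (f : S → U → S) (u u' : ℕ → U) (x0 : S)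
    (k : ℕ) (hu : ∀ j < k, u j = u' j) : traj f u x0 k = traj f u' x0 k := by
  induction k with
  | zero => rfl
  | succ k ih =>
    simp only [traj]
    rw [ih (fun j hj => hu j (Nat.lt_succ_of_lt hj)), hu k (Nat.lt_succ_self k)]

private lemma traj_loop {S U : Type*} (f : S → U → S) (u : ℕ → U) (x0 : S)
    (s d : ℕ) (hd : 0 < d) (hloop : traj f u x0 (s + d) = traj f u x0 s) :
    ∀ j, traj f (fun k => if k < s then u k else u (s + (k - s) % d)) x0 (s + j)
        = traj f u x0 (s + j % d) := by
  intro j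
  induction j with
  | zero =>
    simp only [Nat.zero_mod, Nat.add_zero]
    exact (traj_eq_of_eq_below f u _ x0 s (fun j hj => by simp [hj])).symm
  | succ j ih =>
    have hstep : traj f (fun k => if k < s then u k else u (s + (k - s) % d)) x0 (s + (j+1))
        = f (traj f u x0 (s + j % d)) (u (s + j % d)) := by
      rw [show s + (j+1) = (s + j) + 1 from by ring]
      simp only [traj, ih]
      congr 1
      simp [Nat.not_lt.mpr (Nat.le_add_right s j), Nat.add_sub_cancel_left]
    rw [hstep]
    have hmod : j % d < d := Nat.mod_lt _ hd
    have key : (j + 1) % d = (j % d + 1) % d := by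
      conv_lhs => rw [show j + 1 = (j % d + 1) + d * (j / d) from by
        have := Nat.div_add_mod j d; omega]
      exact Nat.add_mul_mod_self_left _ _ _
    rcases Nat.lt_or_ge (j % d + 1) d with hlt | hge
    · rw [key, Nat.mod_eq_of_lt hlt, ← Nat.add_assoc]
      rfl
    · have heqd : j % d + 1 = d := Nat.le_antisymm (Nat.succ_le_of_lt hmod) hge
      have hz : (j + 1) % d = 0 := by rw [key, heqd, Nat.mod_self]
      rw [hz, Nat.add_zero, ← hloop, show s + d = (s + j % d) + 1 from by omega]
      rfl

private lemma no_agree {S U Y : Type*} (f : S → U → S) (h : S → Y)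
    (hobs : observable f h) (x0 x0' : S) (hne : x0 ≠ x0') (u : ℕ → U) (P s b : ℕ)
    (hlt : s < b) (hb : b ≤ P + 1)
    (heq1 : traj f u x0 b = traj f u x0 s) (heq2 : traj f u x0' b = traj f u x0' s)
    (hcon : ∀ t ≤ P + 1, h (traj f u x0 t) = h (traj f u x0' t)) : False := by
  set d : ℕ := b - s with hdd
  have hd : 0 < d := Nat.sub_pos_of_lt hlt
  have hsd : s + d = b := by omega
  have hloop1 : traj f u x0 (s + d) = traj f u x0 s := by rw [hsd]; exact heq1
  have hloop2 : traj f u x0' (s + d) = traj f u x0' s := by rw [hsd]; exact heq2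
  obtain ⟨t, ht⟩ := hobs x0 x0' hne
    (fun k => if k < s then u k else u (s + (k - s) % d))
  apply ht
  rcases Nat.lt_or_ge t s with hts | hts
  · have h1 : traj f (fun k => if k < s then u k else u (s + (k - s) % d)) x0 t
        = traj f u x0 t :=
      traj_eq_of_eq_below f _ u x0 t (fun j hj => by simp [Nat.lt_trans hj hts])
    have h2 : traj f (fun k => if k < s then u k else u (s + (k - s) % d)) x0' t
        = traj f u x0' t :=
      traj_eq_of_eq_below f _ u x0' t (fun j hj => by simp [Nat.lt_trans hj hts])
    rw [h1, h2]
    exact hcon t (by omega)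
  · obtain ⟨j, rfl⟩ := Nat.exists_eq_add_of_le hts
    rw [traj_loop f u x0 s d hd hloop1 j, traj_loop f u x0' s d hd hloop2 j]
    have : s + j % d ≤ P + 1 := by
      have := Nat.mod_lt j hd
      omega
    exact hcon _ this

/-- Every observable BCN is reconstructible. -/
theorem reconstructible_of_observable {n m q : ℕ}
    (f : (Fin n → Bool) → (Fin m → Bool) → (Fin n → Bool))
    (h : (Fin n → Bool) → (Fin q → Bool))
    (hobs : observable f h) : reconstructible f h := by
  classical
  set p : ℕ := Fintype.card ((Fin n → Bool) × (Fin n → Bool)) with hp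
  have hppos : 0 < p := Fintype.card_pos
  refine ⟨p, hppos, ?_⟩
  intro x0 x0' u hne _
  by_contra hcon
  push_neg at hcon
  have hcard : Fintype.card ((Fin n → Bool) × (Fin n → Bool)) < Fintype.card (Fin (p + 2)) := by
    simp [hp]
  obtain ⟨a, b, hab, heq⟩ :=
    Fintype.exists_ne_map_eq_of_card_lt
      (fun i : Fin (p + 2) => (traj f u x0 i, traj f u x0' i)) hcard
  have h1 := congrArg Prod.fst heq
  have h2 := congrArg Prod.snd heq
  simp only at h1 h2
  rcases Nat.lt_or_ge (a : ℕ) (b : ℕ) with hlt | hge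
  · exact no_agree f h hobs x0 x0' hne u p a b hlt (by omega) h1.symm h2.symm hcon
  · have hlt' : (b : ℕ) < (a : ℕ) :=
      lt_of_le_of_ne hge (fun e => hab (Fin.ext e.symm))
    exact no_agree f h hobs x0 x0' hne u p b a hlt' (by omega) h1 h2 hcon
end

section
/- Consider the Boolean control network with four state nodes x1,…,x4, three inputs u1,u2,u3, and three outputs, given by x1(t+1)=u1(t) XOR x2(t), x2(t+1)=u2(t) XOR x1(t), x3(t+1)=u2(t) XOR x4(t), x4(t+1)=u3(t) XOR x3(t), y1(t)=x1(t), y2(t)=x2(t) AND x3(t), y3(t)=x4(t). Then: (a) this whole BCN is observable; and (b) the sub-BCN with state (x2,x3), three free inputs (u2, v1, v4) (where v1 and v4 play the roles of x1 and x4), dynamics x2(t+1)=u2(t) XOR v1(t), x3(t+1)=u2(t) XOR v4(t), and output y2(t)=x2(t) AND x3(t), is not observable. Hence a BCN being observable does not imply that all sub-BCNs of an aggregation satisfying Assumption 1 are observable. -/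

private lemma key13 : ∀ x0 x0' : Bool × Bool × Bool × Bool, x0 ≠ x0' →
    ∀ u0 : Bool × Bool × Bool,
    (fun x : Bool × Bool × Bool × Bool => (x.1, x.2.1 && x.2.2.1, x.2.2.2)) x0 ≠
      (fun x : Bool × Bool × Bool × Bool => (x.1, x.2.1 && x.2.2.1, x.2.2.2)) x0' ∨
    (fun x : Bool × Bool × Bool × Bool => (x.1, x.2.1 && x.2.2.1, x.2.2.2))
      ((fun (x : Bool × Bool × Bool × Bool) (u : Bool × Bool × Bool) =>
        (xor u.1 x.2.1, xor u.2.1 x.1, xor u.2.1 x.2.2.2, xor u.2.2 x.2.2.1)) x0 u0) ≠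
    (fun x : Bool × Bool × Bool × Bool => (x.1, x.2.1 && x.2.2.1, x.2.2.2))
      ((fun (x : Bool × Bool × Bool × Bool) (u : Bool × Bool × Bool) =>
        (xor u.1 x.2.1, xor u.2.1 x.1, xor u.2.1 x.2.2.2, xor u.2.2 x.2.2.1)) x0' u0) := by
  decide

/-- The whole BCN `x1(t+1)=u1⊕x2`, `x2(t+1)=u2⊕x1`, `x3(t+1)=u2⊕x4`, `x4(t+1)=u3⊕x3`,
`y1=x1`, `y2=x2∧x3`, `y3=x4` is observable, yet the sub-BCN with state `(x2,x3)`,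
free inputs `(u2,v1,v4)`, dynamics `x2(t+1)=u2⊕v1`, `x3(t+1)=u2⊕v4`, output
`y2=x2∧x3`, is not observable. -/
theorem example13_whole_observable_sub_not :
    observable
      (fun (x : Bool × Bool × Bool × Bool) (u : Bool × Bool × Bool) =>
        (xor u.1 x.2.1, xor u.2.1 x.1, xor u.2.1 x.2.2.2, xor u.2.2 x.2.2.1))
      (fun x : Bool × Bool × Bool × Bool => (x.1, x.2.1 && x.2.2.1, x.2.2.2)) ∧
    ¬ observable
      (fun (_ : Bool × Bool) (uv : Bool × Bool × Bool) =>
        (xor uv.1 uv.2.1, xor uv.1 uv.2.2))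
      (fun z : Bool × Bool => z.1 && z.2) := by
  constructor
  · intro x0 x0' hne u
    rcases key13 x0 x0' hne (u 0) with h | h
    · exact ⟨0, h⟩
    · exact ⟨1, h⟩
  · intro hobs
    obtain ⟨t, ht⟩ := hobs (true, false) (false, true) (by decide)
      (fun _ => (false, false, false))
    cases t with
    | zero => exact ht rfl
    | succ n => exact ht (by simp [traj])
end

section
/- Consider the Boolean control network with four state nodes x1,…,x4, two inputs u1,u2, and two outputs, given by x1(t+1)=u1(t), x2(t+1)=x1(t) XOR x4(t), x3(t+1)=x1(t) XOR x4(t) XOR 1, x4(t+1)=u2(t), y1(t)=x2(t), y2(t)=x3(t). Then: (a) the sub-BCN Σ1 with state (x1,x2), free inputs (u1, v4) (v4 playing the role of x4), dynamics x1(t+1)=u1(t), x2(t+1)=x1(t) XOR v4(t), output y1(t)=x2(t), is observable; (b) the sub-BCN Σ2 with state (x3,x4), free inputs (u2, v1) (v1 playing the role of x1), dynamics x3(t+1)=v1(t) XOR x4(t) XOR 1, x4(t+1)=u2(t), output y2(t)=x3(t), is observable; and (c) the whole BCN is not observable. Hence for a cyclic aggregation satisfying Assumption 1, all sub-BCNs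 being observable does not imply the whole BCN is observable. -/
/-- For the BCN `x1(t+1)=u1`, `x2(t+1)=x1⊕x4`, `x3(t+1)=x1⊕x4⊕1`, `x4(t+1)=u2`,
`y1=x2`, `y2=x3`: the sub-BCN `Σ1` (state `(x1,x2)`, inputs `(u1,v4)`, dynamics
`x1(t+1)=u1`, `x2(t+1)=x1⊕v4`, output `y1=x2`) is observable, the sub-BCN `Σ2`
(state `(x3,x4)`, inputs `(u2,v1)`, dynamics `x3(t+1)=v1⊕x4⊕1`, `x4(t+1)=u2`,
output `y2=x3`) is observable, yet the whole BCN is not observable. -/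
theorem example15_subs_observable_whole_not :
    observable
      (fun (z : Bool × Bool) (uv : Bool × Bool) => (uv.1, xor z.1 uv.2))
      (fun z : Bool × Bool => z.2) ∧
    observable
      (fun (z : Bool × Bool) (uv : Bool × Bool) => (!(xor uv.2 z.2), uv.1))
      (fun z : Bool × Bool => z.1) ∧
    ¬ observable
      (fun (x : Bool × Bool × Bool × Bool) (u : Bool × Bool) =>
        (u.1, xor x.1 x.2.2.2, !(xor x.1 x.2.2.2), u.2))
      (fun x : Bool × Bool × Bool × Bool => (x.2.1, x.2.2.1)) := by
  refine ⟨?_, ?_, ?_⟩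
  · intro x0 x0' hne u
    by_cases h2 : x0.2 = x0'.2
    · have h1 : x0.1 ≠ x0'.1 := fun h => hne (Prod.ext h h2)
      refine ⟨1, ?_⟩
      simp only [traj]
      cases hb : x0.1 <;> cases hb' : x0'.1 <;> simp_all
    · exact ⟨0, h2⟩
  · intro x0 x0' hne u
    by_cases h1 : x0.1 = x0'.1
    · have h2 : x0.2 ≠ x0'.2 := fun h => hne (Prod.ext h1 h)
      refine ⟨1, ?_⟩
      simp only [traj]
      cases hb : x0.2 <;> cases hb' : x0'.2 <;> simp_all
    · exact ⟨0, h1⟩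
  · intro hobs
    obtain ⟨t, ht⟩ := hobs (false, false, false, false) (true, false, false, true)
      (by decide) (fun _ => (false, false))
    apply ht
    have key : ∀ s, traj
        (fun (x : Bool × Bool × Bool × Bool) (u : Bool × Bool) =>
          (u.1, xor x.1 x.2.2.2, !(xor x.1 x.2.2.2), u.2))
        (fun _ => (false, false)) (false, false, false, false) (s + 1) =
        traj
        (fun (x : Bool × Bool × Bool × Bool) (u : Bool × Bool) =>
          (u.1, xor x.1 x.2.2.2, !(xor x.1 x.2.2.2), u.2))
        (fun _ => (false, false)) (true, false, false, true) (s + 1) := by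
      intro s
      induction s with
      | zero => rfl
      | succ n ih => simp only [traj, ih]
    cases t with
    | zero => rfl
    | succ s => rw [key s]
end

section
/- Consider the Boolean control network with four state nodes x1,…,x4, two inputs u1,u2, and three outputs, given by x1(t+1)=u1(t) XOR x2(t), x2(t+1)=x3(t), x3(t+1)=x2(t), x4(t+1)=u2(t) XOR x3(t), y1(t)=x1(t), y2(t)=x2(t) AND x3(t), y3(t)=x4(t). Then: (a) this whole BCN is reconstructible; and (b) the sub-BCN with state (x2,x3), no inputs, dynamics x2(t+1)=x3(t), x3(t+1)=x2(t), and output y2(t)=x2(t) AND x3(t), is not reconstructible. Hence the whole BCN being reconstructible does not imply all sub-BCNs of an acyclic aggregation satisfying Assumption 1 are reconstructible. -/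
lemma swap_traj (u : ℕ → Unit) :
    ∀ t, (traj (fun (z : Bool × Bool) (_ : Unit) => (z.2, z.1)) u (false, true) t,
          traj (fun (z : Bool × Bool) (_ : Unit) => (z.2, z.1)) u (true, false) t)
      = ((false, true), (true, false)) ∨
      (traj (fun (z : Bool × Bool) (_ : Unit) => (z.2, z.1)) u (false, true) t,
          traj (fun (z : Bool × Bool) (_ : Unit) => (z.2, z.1)) u (true, false) t)
      = ((true, false), (false, true)) := by
  intro t
  induction t with
  | zero => left; rfl
  | succ n ih =>
    rcases ih with h | h <;> simp only [traj] <;>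
      rw [show traj _ u (false,true) n = _ from congrArg Prod.fst h,
          show traj _ u (true,false) n = _ from congrArg Prod.snd h] <;> simp

/-- The whole BCN `x1(t+1)=u1⊕x2`, `x2(t+1)=x3`, `x3(t+1)=x2`, `x4(t+1)=u2⊕x3`,
`y1=x1`, `y2=x2∧x3`, `y3=x4` is reconstructible, yet the sub-BCN with state
`(x2,x3)`, no inputs, dynamics `x2(t+1)=x3`, `x3(t+1)=x2`, output `y2=x2∧x3`,
is not reconstructible. -/
theorem example16_whole_reconstructible_sub_not :
    reconstructible
      (fun (x : Bool × Bool × Bool × Bool) (u : Bool × Bool) =>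
        (xor u.1 x.2.1, x.2.2.1, x.2.1, xor u.2 x.2.2.1))
      (fun x : Bool × Bool × Bool × Bool => (x.1, x.2.1 && x.2.2.1, x.2.2.2)) ∧
    ¬ reconstructible
      (fun (z : Bool × Bool) (_ : Unit) => (z.2, z.1))
      (fun z : Bool × Bool => z.1 && z.2) := by
  constructor
  · refine ⟨1, one_pos, ?_⟩
    intro x0 x0' u hne _
    have key : ∀ (a b : Bool × Bool × Bool × Bool) (u0 : Bool × Bool), a ≠ b →
        (fun x : Bool × Bool × Bool × Bool => (x.1, x.2.1 && x.2.2.1, x.2.2.2)) a ≠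
          (fun x : Bool × Bool × Bool × Bool => (x.1, x.2.1 && x.2.2.1, x.2.2.2)) b ∨
        (fun x : Bool × Bool × Bool × Bool => (x.1, x.2.1 && x.2.2.1, x.2.2.2))
          ((fun (x : Bool × Bool × Bool × Bool) (u : Bool × Bool) =>
            (xor u.1 x.2.1, x.2.2.1, x.2.1, xor u.2 x.2.2.1)) a u0) ≠
        (fun x : Bool × Bool × Bool × Bool => (x.1, x.2.1 && x.2.2.1, x.2.2.2))
          ((fun (x : Bool × Bool × Bool × Bool) (u : Bool × Bool) =>
            (xor u.1 x.2.1, x.2.2.1, x.2.1, xor u.2 x.2.2.1)) b u0) := by decide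
    rcases key x0 x0' (u 0) hne with h | h
    · exact ⟨0, by norm_num, h⟩
    · exact ⟨1, by norm_num, h⟩
  · rintro ⟨p, hp, H⟩
    obtain ⟨t, ht, hout⟩ := H (false, true) (true, false) (fun _ => ()) (by decide)
      (by rcases swap_traj (fun _ => ()) (p + 1) with h | h <;>
            rw [show traj _ _ (false,true) (p+1) = _ from congrArg Prod.fst h,
                show traj _ _ (true,false) (p+1) = _ from congrArg Prod.snd h] <;> decide)
    apply hout
    rcases swap_traj (fun _ => ()) t with h | h <;>
      rw [show traj _ _ (false,true) t = _ from congrArg Prod.fst h,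
          show traj _ _ (true,false) t = _ from congrArg Prod.snd h] <;> rfl
end

section
/- Consider the Boolean control network with four state nodes x1,…,x4, two inputs u1,u2, and two outputs, given by x1(t+1)=u1(t) OR x1(t), x2(t+1)=x1(t) XOR x4(t), x3(t+1)=x1(t) XOR x4(t), x4(t+1)=u2(t) OR x4(t), y1(t)=x2(t), y2(t)=x3(t). Then: (a) the sub-BCN Σ1 with state (x1,x2), free inputs (u1, v4) (v4 playing the role of x4), dynamics x1(t+1)=u1(t) OR x1(t), x2(t+1)=x1(t) XOR v4(t), output y1(t)=x2(t), is reconstructible; (b) the sub-BCN Σ2 with state (x3,x4), free inputs (u2, v1) (v1 playing the role of x1), dynamics x3(t+1)=v1(t) XOR x4(t), x4(t+1)=u2(t) OR x4(t), output y2(t)=x3(t), is reconstructible; and (c) the whole BCN is not reconstructible. Hence for a cyclic aggregation satisfying Assumption 1, all sub-BCNs being reconstructible does not imply the whole BCN is reconstructible. -/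
def Fw : Bool × Bool × Bool × Bool → Bool × Bool → Bool × Bool × Bool × Bool :=
  fun x u => (u.1 || x.1, xor x.1 x.2.2.2, xor x.1 x.2.2.2, u.2 || x.2.2.2)

lemma trajA (t : ℕ) :
    traj Fw (fun _ => (false, false)) (true, false, false, false) t
      = if t = 0 then (true, false, false, false) else (true, true, true, false) := by
  induction t with
  | zero => simp [traj]
  | succ n ih =>
    rw [traj, ih]
    by_cases hn : n = 0 <;> simp [hn, Fw]

lemma trajB (t : ℕ) :
    traj Fw (fun _ => (false, false)) (false, false, false, true) t
      = if t = 0 then (false, false, false, true) else (false, true, true, true) := by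
  induction t with
  | zero => simp [traj]
  | succ n ih =>
    rw [traj, ih]
    by_cases hn : n = 0 <;> simp [hn, Fw]

/-- For the BCN `x1(t+1)=u1∨x1`, `x2(t+1)=x1⊕x4`, `x3(t+1)=x1⊕x4`, `x4(t+1)=u2∨x4`,
`y1=x2`, `y2=x3`: the sub-BCN `Σ1` (state `(x1,x2)`, inputs `(u1,v4)`, dynamics
`x1(t+1)=u1∨x1`, `x2(t+1)=x1⊕v4`, output `y1=x2`) is reconstructible, the sub-BCN
`Σ2` (state `(x3,x4)`, inputs `(u2,v1)`, dynamics `x3(t+1)=v1⊕x4`, `x4(t+1)=u2∨x4`,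
output `y2=x3`) is reconstructible, yet the whole BCN is not reconstructible. -/
theorem example17_subs_reconstructible_whole_not :
    reconstructible
      (fun (z : Bool × Bool) (uv : Bool × Bool) => (uv.1 || z.1, xor z.1 uv.2))
      (fun z : Bool × Bool => z.2) ∧
    reconstructible
      (fun (z : Bool × Bool) (uv : Bool × Bool) => (xor uv.2 z.2, uv.1 || z.2))
      (fun z : Bool × Bool => z.1) ∧
    ¬ reconstructible
      (fun (x : Bool × Bool × Bool × Bool) (u : Bool × Bool) =>
        (u.1 || x.1, xor x.1 x.2.2.2, xor x.1 x.2.2.2, u.2 || x.2.2.2))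
      (fun x : Bool × Bool × Bool × Bool => (x.2.1, x.2.2.1)) := by
  refine ⟨⟨1, one_pos, ?_⟩, ⟨1, one_pos, ?_⟩, ?_⟩
  · intro x0 x0' u hne _
    by_cases h2 : x0.2 = x0'.2
    · by_cases h1 : x0.1 = x0'.1
      · exact absurd (Prod.ext h1 h2) hne
      · refine ⟨1, by norm_num, ?_⟩
        simp only [traj]
        revert h1
        cases x0.1 <;> cases x0'.1 <;> cases (u 0).2 <;> simp
    · exact ⟨0, by norm_num, by simpa [traj] using h2⟩
  · intro x0 x0' u hne _
    by_cases h1 : x0.1 = x0'.1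
    · by_cases h2 : x0.2 = x0'.2
      · exact absurd (Prod.ext h1 h2) hne
      · refine ⟨1, by norm_num, ?_⟩
        simp only [traj]
        revert h2
        cases x0.2 <;> cases x0'.2 <;> cases (u 0).2 <;> simp
    · exact ⟨0, by norm_num, by simpa [traj] using h1⟩
  · rintro ⟨p, hp, H⟩
    obtain ⟨t, ht, hne⟩ := H (true, false, false, false) (false, false, false, true)
      (fun _ => (false, false)) (by decide)
      (by
        show traj Fw _ _ _ ≠ traj Fw _ _ _
        rw [trajA, trajB]
        simp)
    apply hne
    show (fun x : Bool × Bool × Bool × Bool => (x.2.1, x.2.2.1)) (traj Fw _ _ t)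
      = (fun x : Bool × Bool × Bool × Bool => (x.2.1, x.2.2.1)) (traj Fw _ _ t)
    rw [trajA, trajB]
    by_cases h : t = 0 <;> simp [h]
end

section
/- Consider the Boolean control network with eight state nodes x1,…,x8, one input u1, and three outputs, given by x1(t+1)=x1(t) XOR (x2(t) AND x3(t)), x2(t+1)=x2(t) XOR x3(t), x3(t+1)=x3(t) XOR 1, x4(t+1)=x5(t) AND u1(t), x5(t+1)=x4(t) XOR u1(t) XOR x2(t), x6(t+1)=x8(t) XOR x5(t), x7(t+1)=x6(t) XOR x3(t), x8(t+1)=x7(t), y1(t)=x1(t) AND (x2(t) XOR x3(t)), y2(t)=x5(t), y3(t)=x8(t). This BCN is observable. -/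
private abbrev B8 := Bool × Bool × Bool × Bool × Bool × Bool × Bool × Bool

private def F8 : B8 → Bool → B8 :=
  fun x u =>
    (xor x.1 (x.2.1 && x.2.2.1),
     xor x.2.1 x.2.2.1,
     !x.2.2.1,
     x.2.2.2.2.1 && u,
     xor (xor x.2.2.2.1 u) x.2.1,
     xor x.2.2.2.2.2.2.2 x.2.2.2.2.1,
     xor x.2.2.2.2.2.1 x.2.2.1,
     x.2.2.2.2.2.2.1)

private def H8 : B8 → Bool × Bool × Bool :=
  fun x => (x.1 && (xor x.2.1 x.2.2.1), x.2.2.2.2.1, x.2.2.2.2.2.2.2)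

private lemma xor_rc : ∀ p q r : Bool, xor q p = xor r p → q = r := by decide
private lemma xor_lc : ∀ p q r : Bool, xor p q = xor p r → q = r := by decide
private lemma not_inj8 : ∀ p q : Bool, (!p) = (!q) → p = q := by decide

private lemma aux8 (u : ℕ → Bool) (a b : ℕ → B8)
    (ra : ∀ t, a (t + 1) = F8 (a t) (u t))
    (rb : ∀ t, b (t + 1) = F8 (b t) (u t))
    (hc : ∀ t, H8 (a t) = H8 (b t)) : a 0 = b 0 := by
  have hy1 : ∀ t, ((a t).1 && xor (a t).2.1 (a t).2.2.1)
      = ((b t).1 && xor (b t).2.1 (b t).2.2.1) := fun t => congrArg (fun p => p.1) (hc t)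
  have h5 : ∀ t, (a t).2.2.2.2.1 = (b t).2.2.2.2.1 := fun t => congrArg (fun p => p.2.1) (hc t)
  have h8 : ∀ t, (a t).2.2.2.2.2.2.2 = (b t).2.2.2.2.2.2.2 :=
    fun t => congrArg (fun p => p.2.2) (hc t)
  -- x4 equal at all positive times
  have h4 : ∀ t, (a (t+1)).2.2.2.1 = (b (t+1)).2.2.2.1 := by
    intro t
    rw [ra, rb]
    show ((a t).2.2.2.2.1 && u t) = ((b t).2.2.2.2.1 && u t)
    rw [h5]
  -- x2 equal at all positive times
  have h2s : ∀ t, (a (t+1)).2.1 = (b (t+1)).2.1 := by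
    intro t
    have e := h5 (t+1+1)
    rw [ra (t+1), rb (t+1)] at e
    have e' : xor (xor ((a (t+1)).2.2.2.1) (u (t+1))) ((a (t+1)).2.1)
        = xor (xor ((b (t+1)).2.2.2.1) (u (t+1))) ((b (t+1)).2.1) := e
    rw [h4 t] at e'
    exact xor_lc _ _ _ e'
  -- x3 equal at all positive times
  have h3s : ∀ t, (a (t+1)).2.2.1 = (b (t+1)).2.2.1 := by
    intro t
    have e := h2s (t+1)
    rw [ra (t+1), rb (t+1)] at e
    have e' : xor ((a (t+1)).2.1) ((a (t+1)).2.2.1)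
        = xor ((b (t+1)).2.1) ((b (t+1)).2.2.1) := e
    rw [h2s t] at e'
    exact xor_lc _ _ _ e'
  -- x3 equal at time 0
  have h3_0 : (a 0).2.2.1 = (b 0).2.2.1 := by
    have e := h3s 0
    rw [ra 0, rb 0] at e
    have e' : (!(a 0).2.2.1) = (!(b 0).2.2.1) := e
    exact not_inj8 _ _ e'
  have h3all : ∀ t, (a t).2.2.1 = (b t).2.2.1 := by
    intro t
    cases t with
    | zero => exact h3_0
    | succ n => exact h3s n
  -- x2 equal at time 0
  have h2_0 : (a 0).2.1 = (b 0).2.1 := by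
    have e := h2s 0
    rw [ra 0, rb 0] at e
    have e' : xor ((a 0).2.1) ((a 0).2.2.1) = xor ((b 0).2.1) ((b 0).2.2.1) := e
    rw [h3_0] at e'
    exact xor_rc _ _ _ e'
  have h2all : ∀ t, (a t).2.1 = (b t).2.1 := by
    intro t
    cases t with
    | zero => exact h2_0
    | succ n => exact h2s n
  -- x4 equal at time 0
  have h4_0 : (a 0).2.2.2.1 = (b 0).2.2.2.1 := by
    have e := h5 (0+1)
    rw [ra 0, rb 0] at e
    have e' : xor (xor ((a 0).2.2.2.1) (u 0)) ((a 0).2.1)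
        = xor (xor ((b 0).2.2.2.1) (u 0)) ((b 0).2.1) := e
    rw [h2_0] at e'
    exact xor_rc _ _ _ (xor_rc _ _ _ e')
  -- x7 equal at all times
  have h7 : ∀ t, (a t).2.2.2.2.2.2.1 = (b t).2.2.2.2.2.2.1 := by
    intro t
    have e := h8 (t+1)
    rw [ra t, rb t] at e
    exact e
  -- x6 equal at time 0
  have h6_0 : (a 0).2.2.2.2.2.1 = (b 0).2.2.2.2.2.1 := by
    have e := h7 (0+1)
    rw [ra 0, rb 0] at e
    have e' : xor ((a 0).2.2.2.2.2.1) ((a 0).2.2.1)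
        = xor ((b 0).2.2.2.2.2.1) ((b 0).2.2.1) := e
    rw [h3_0] at e'
    exact xor_rc _ _ _ e'
  -- x1 difference propagates backwards
  have h1dec : ∀ t, (a (t+1)).1 = (b (t+1)).1 → (a t).1 = (b t).1 := by
    intro t e
    rw [ra, rb] at e
    have e' : xor ((a t).1) ((a t).2.1 && (a t).2.2.1)
        = xor ((b t).1) ((b t).2.1 && (b t).2.2.1) := e
    rw [← h2all t, ← h3all t] at e'
    exact xor_rc _ _ _ e'
  have h1zero : ∀ t, (a t).1 = (b t).1 → (a 0).1 = (b 0).1 := by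
    intro t
    induction t with
    | zero => exact id
    | succ n ih => intro e; exact ih (h1dec n e)
  have key : ∀ t, xor ((a t).2.1) ((a t).2.2.1) = true → (a 0).1 = (b 0).1 := by
    intro t hs
    have e := hy1 t
    rw [← h2all t, ← h3all t, hs, Bool.and_true, Bool.and_true] at e
    exact h1zero t e
  have c2 : ∀ t, (a (t+1)).2.1 = xor ((a t).2.1) ((a t).2.2.1) := by
    intro t; rw [ra]; rfl
  have c3 : ∀ t, (a (t+1)).2.2.1 = !((a t).2.2.1) := by
    intro t; rw [ra]; rfl
  have h1_0 : (a 0).1 = (b 0).1 := by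
    cases hA2 : (a 0).2.1 <;> cases hA3 : (a 0).2.2.1
    · apply key (0+1)
      rw [c2 0, c3 0, hA2, hA3]; decide
    · apply key 0
      rw [hA2, hA3]; decide
    · apply key 0
      rw [hA2, hA3]; decide
    · apply key (0+1+1)
      rw [c2 (0+1), c3 (0+1), c2 0, c3 0, hA2, hA3]; decide
  exact Prod.ext_iff.mpr ⟨h1_0, Prod.ext_iff.mpr ⟨h2all 0, Prod.ext_iff.mpr ⟨h3all 0,
    Prod.ext_iff.mpr ⟨h4_0, Prod.ext_iff.mpr ⟨h5 0, Prod.ext_iff.mpr ⟨h6_0,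
    Prod.ext_iff.mpr ⟨h7 0, h8 0⟩⟩⟩⟩⟩⟩⟩

/-- The BCN with eight state nodes `x1(t+1)=x1⊕(x2∧x3)`, `x2(t+1)=x2⊕x3`,
`x3(t+1)=x3⊕1`, `x4(t+1)=x5∧u1`, `x5(t+1)=x4⊕u1⊕x2`, `x6(t+1)=x8⊕x5`,
`x7(t+1)=x6⊕x3`, `x8(t+1)=x7`, and outputs `y1=x1∧(x2⊕x3)`, `y2=x5`, `y3=x8`,
is observable. -/
theorem example19_observable :
    observable
      (fun (x : Bool × Bool × Bool × Bool × Bool × Bool × Bool × Bool) (u : Bool) =>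
        (xor x.1 (x.2.1 && x.2.2.1),
         xor x.2.1 x.2.2.1,
         !x.2.2.1,
         x.2.2.2.2.1 && u,
         xor (xor x.2.2.2.1 u) x.2.1,
         xor x.2.2.2.2.2.2.2 x.2.2.2.2.1,
         xor x.2.2.2.2.2.1 x.2.2.1,
         x.2.2.2.2.2.2.1))
      (fun x : Bool × Bool × Bool × Bool × Bool × Bool × Bool × Bool =>
        (x.1 && (xor x.2.1 x.2.2.1), x.2.2.2.2.1, x.2.2.2.2.2.2.2)) := by
  intro x0 x0' hne u
  by_contra hcon
  push_neg at hcon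
  exact hne (aux8 u (traj F8 u x0) (traj F8 u x0') (fun _ => rfl) (fun _ => rfl) hcon)
end
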